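/- Let λ_n (n ≥ 1) be a strictly increasing sequence of positive reals tending to infinity and w_n > 0 with ∑ w_n/λ_n² < ∞. Then on each interval (λ_k, λ_{k+1}), the function F(z) = ∑_{n≥1} w_n (1/(λ_n − z) − λ_n/(λ_n² + 1)) is strictly increasing and continuous, tends to −∞ as z ↓ λ_k and to +∞ as z ↑ λ_{k+1}; hence for every α ∈ ℝ there is exactly one solution z ∈ (λ_k, λ_{k+1}) of F(z) = α. -/

import Mathlib

/-!
For fixed `z` the `n`-th term `w n * (1 / (λₙ - z) - λₙ / (λₙ ^ 2 + 1))` is `O(w n / λₙ ^ 2)`,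
so the series converges everywhere, and on `(λₖ, λₖ₊₁)`, which contains no `λₙ`, every term is
strictly increasing. Hence an increment `F z₂ - F z₁` dominates the increment of any single
term: with the term `n = k` this gives strict monotonicity, and with the terms `n = k` and
`n = k + 1`, which tend to `∓∞` at the two endpoints, the one-sided limits. On a compact
subinterval each term is squeezed between its values at the endpoints, so the series converges
uniformly there and `F` is continuous; the intermediate value theorem finishes the proof.
-/

open Filter Set Topology

noncomputable def regResolvent (a z : ℝ) : ℝ := 1 / (a - z) - a / (a ^ 2 + 1)

noncomputable def resolventSeries (lam w : ℕ → ℝ) (z : ℝ) : ℝ :=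
  ∑' n, w n * regResolvent (lam n) z

lemma strictMonoOn_regResolvent_Ioi (a : ℝ) : StrictMonoOn (regResolvent a) (Ioi a) := by
  intro x hx y _ hxy
  have : 1 / (a - x) < 1 / (a - y) :=
    one_div_lt_one_div_of_neg_of_lt (sub_neg.2 hx) (by linarith)
  simp only [regResolvent]
  linarith

lemma strictMonoOn_regResolvent_Iio (a : ℝ) : StrictMonoOn (regResolvent a) (Iio a) := by
  intro x _ y hy hxy
  have : 1 / (a - x) < 1 / (a - y) :=
    one_div_lt_one_div_of_lt (sub_pos.2 hy) (by linarith)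
  simp only [regResolvent]
  linarith

lemma continuousOn_regResolvent {a : ℝ} {s : Set ℝ} (ha : a ∉ s) :
    ContinuousOn (regResolvent a) s :=
  (continuousOn_const.div (continuousOn_const.sub continuousOn_id) fun _ hz =>
    sub_ne_zero.2 (ne_of_mem_of_not_mem hz ha).symm).sub continuousOn_const

lemma tendsto_regResolvent_nhdsLT (a : ℝ) : Tendsto (regResolvent a) (𝓝[<] a) atTop := by
  have h₀ : Tendsto (fun z => a - z) (𝓝 a) (𝓝 0) := by
    simpa using (continuous_sub_left a).tendsto' a 0 (sub_self a)
  have h : Tendsto (fun z => a - z) (𝓝[<] a) (𝓝[>] 0) := tendsto_nhdsWithin_iff.2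
    ⟨h₀.mono_left nhdsWithin_le_nhds,
      eventually_nhdsWithin_of_forall fun _ hz => mem_Ioi.2 (sub_pos.2 hz)⟩
  refine (h.inv_tendsto_nhdsGT_zero.atTop_add
    (tendsto_const_nhds (x := -(a / (a ^ 2 + 1))))).congr fun z => ?_
  simp only [Pi.inv_apply, regResolvent, one_div, sub_eq_add_neg]

lemma tendsto_regResolvent_nhdsGT (a : ℝ) : Tendsto (regResolvent a) (𝓝[>] a) atBot := by
  have h₀ : Tendsto (fun z => z - a) (𝓝 a) (𝓝 0) := by
    simpa using (continuous_sub_right a).tendsto' a 0 (sub_self a)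
  have h : Tendsto (fun z => z - a) (𝓝[>] a) (𝓝[>] 0) := tendsto_nhdsWithin_iff.2
    ⟨h₀.mono_left nhdsWithin_le_nhds,
      eventually_nhdsWithin_of_forall fun _ hz => mem_Ioi.2 (sub_pos.2 hz)⟩
  have := (tendsto_neg_atTop_atBot.comp h.inv_tendsto_nhdsGT_zero).atBot_add
    (tendsto_const_nhds (x := -(a / (a ^ 2 + 1))))
  refine this.congr fun z => ?_
  simp only [Function.comp, Pi.inv_apply, regResolvent, one_div, ← neg_sub z a, inv_neg,
    sub_eq_add_neg]

lemma abs_regResolvent_le {a z : ℝ} (ha₁ : 1 ≤ a) (ha : 2 * |z| ≤ a) :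
    |regResolvent a z| ≤ 2 * (1 + |z|) / a ^ 2 := by
  have hz : a / 2 ≤ |a - z| := by
    linarith [abs_sub_abs_le_abs_sub a z, abs_of_pos (by linarith : (0 : ℝ) < a)]
  have hnum : |1 + a * z| ≤ a * (1 + |z|) := by
    calc |1 + a * z| ≤ 1 + a * |z| := by
          simpa [abs_mul, abs_of_pos (by linarith : (0 : ℝ) < a)] using abs_add_le 1 (a * z)
      _ ≤ a * (1 + |z|) := by nlinarith
  have hpos : 0 < |a - z| := by linarith
  have hform : regResolvent a z = (1 + a * z) / ((a - z) * (a ^ 2 + 1)) := by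
    have : a - z ≠ 0 := abs_pos.1 hpos
    rw [regResolvent]
    field_simp
    ring
  rw [hform, abs_div, abs_mul, abs_of_pos (by positivity : (0 : ℝ) < a ^ 2 + 1),
    div_le_div_iff₀ (by positivity) (by positivity)]
  calc |1 + a * z| * a ^ 2 ≤ a * (1 + |z|) * a ^ 2 := by gcongr
    _ = 2 * (1 + |z|) * (a / 2 * a ^ 2) := by ring
    _ ≤ 2 * (1 + |z|) * (|a - z| * (a ^ 2 + 1)) := by
      gcongr
      linarith

lemma summable_regResolvent {lam w : ℕ → ℝ} (htop : Tendsto lam atTop atTop)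
    (hw : ∀ n, 0 ≤ w n) (hwsum : Summable fun n => w n / lam n ^ 2) (z : ℝ) :
    Summable fun n => w n * regResolvent (lam n) z := by
  refine Summable.of_norm_bounded_eventually (hwsum.mul_left (2 * (1 + |z|))) ?_
  rw [Nat.cofinite_eq_atTop]
  filter_upwards [htop.eventually_ge_atTop 1, htop.eventually_ge_atTop (2 * |z|)] with n h₁ h₂
  rw [norm_mul, Real.norm_of_nonneg (hw n), Real.norm_eq_abs]
  calc w n * |regResolvent (lam n) z| ≤ w n * (2 * (1 + |z|) / lam n ^ 2) :=
        mul_le_mul_of_nonneg_left (abs_regResolvent_le h₁ h₂) (hw n)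
    _ = 2 * (1 + |z|) * (w n / lam n ^ 2) := by ring

lemma sub_le_tsum_sub_tsum {ι : Type*} {f g : ι → ℝ} (hf : Summable f) (hg : Summable g)
    (hfg : ∀ j, f j ≤ g j) (i : ι) : g i - f i ≤ ∑' j, g j - ∑' j, f j := by
  rw [← hg.tsum_sub hf]
  exact (hg.sub hf).le_tsum i fun j _ => sub_nonneg.2 (hfg j)

lemma continuousOn_tsum_of_monotoneOn {ι : Type*} {f : ι → ℝ → ℝ} {a b : ℝ}
    (hcont : ∀ i, ContinuousOn (f i) (Ioo a b)) (hmono : ∀ i, MonotoneOn (f i) (Ioo a b))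
    (hsum : ∀ x ∈ Ioo a b, Summable fun i => f i x) :
    ContinuousOn (fun x => ∑' i, f i x) (Ioo a b) := by
  intro x hx
  obtain ⟨c, hac, hcx⟩ := exists_between hx.1
  obtain ⟨d, hxd, hdb⟩ := exists_between hx.2
  have hcd : Icc c d ⊆ Ioo a b := Icc_subset_Ioo hac hdb
  have hc : c ∈ Ioo a b := hcd ⟨le_rfl, (hcx.trans hxd).le⟩
  have hd : d ∈ Ioo a b := hcd ⟨(hcx.trans hxd).le, le_rfl⟩
  have hbound : ∀ i, ∀ y ∈ Icc c d, ‖f i y‖ ≤ |f i c| + |f i d| := fun i y hy => by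
    have h₁ := hmono i hc (hcd hy) hy.1
    have h₂ := hmono i (hcd hy) hd hy.2
    rw [Real.norm_eq_abs, abs_le]
    constructor <;> linarith [neg_abs_le (f i c), le_abs_self (f i d), abs_nonneg (f i c),
      abs_nonneg (f i d)]
  have := continuousOn_tsum (fun i => (hcont i).mono hcd) ((hsum c hc).abs.add (hsum d hd).abs)
    hbound
  exact (this.continuousAt (Icc_mem_nhds hcx hxd)).continuousWithinAt

lemma existsUnique_eq_of_strictMonoOn_Ioo {f : ℝ → ℝ} {a b : ℝ} (hab : a < b)
    (hmono : StrictMonoOn f (Ioo a b)) (hcont : ContinuousOn f (Ioo a b))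
    (hbot : Tendsto f (𝓝[>] a) atBot) (htop : Tendsto f (𝓝[<] b) atTop) (y : ℝ) :
    ∃! x, x ∈ Ioo a b ∧ f x = y := by
  obtain ⟨x, hx, rfl⟩ := hcont.surjOn_of_tendsto (nonempty_Ioo.2 hab)
    ((tendsto_comp_coe_Ioo_atBot hab).2 hbot) ((tendsto_comp_coe_Ioo_atTop hab).2 htop)
    (mem_univ y)
  exact ⟨x, ⟨hx, rfl⟩, fun x' hx' => hmono.injOn hx'.1 hx hx'.2⟩

section Interlacing

variable {lam w : ℕ → ℝ}

lemma StrictMono.Ioo_succ_subset_Ioi_or_Iio (hmono : StrictMono lam) (k n : ℕ) :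
    Ioo (lam k) (lam (k + 1)) ⊆ Ioi (lam n) ∨ Ioo (lam k) (lam (k + 1)) ⊆ Iio (lam n) := by
  rcases le_or_gt n k with h | h
  · exact Or.inl fun _ hz => (hmono.monotone h).trans_lt hz.1
  · exact Or.inr fun _ hz => hz.2.trans_le (hmono.monotone h)

lemma strictMonoOn_regResolvent_Ioo (hmono : StrictMono lam) (k n : ℕ) :
    StrictMonoOn (regResolvent (lam n)) (Ioo (lam k) (lam (k + 1))) :=
  (hmono.Ioo_succ_subset_Ioi_or_Iio k n).elim (strictMonoOn_regResolvent_Ioi _).mono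
    (strictMonoOn_regResolvent_Iio _).mono

lemma continuousOn_regResolvent_Ioo (hmono : StrictMono lam) (k n : ℕ) :
    ContinuousOn (regResolvent (lam n)) (Ioo (lam k) (lam (k + 1))) :=
  continuousOn_regResolvent fun h => (hmono.Ioo_succ_subset_Ioi_or_Iio k n).elim
    (fun hs => lt_irrefl (lam n) (hs h)) (fun hs => lt_irrefl (lam n) (hs h))

lemma term_sub_le_resolventSeries_sub (hmono : StrictMono lam) (htop : Tendsto lam atTop atTop)
    (hw : ∀ n, 0 ≤ w n) (hwsum : Summable fun n => w n / lam n ^ 2) {k : ℕ} (j : ℕ) {z₁ z₂ : ℝ}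
    (h₁ : z₁ ∈ Ioo (lam k) (lam (k + 1))) (h₂ : z₂ ∈ Ioo (lam k) (lam (k + 1))) (h : z₁ ≤ z₂) :
    w j * regResolvent (lam j) z₂ - w j * regResolvent (lam j) z₁ ≤
      resolventSeries lam w z₂ - resolventSeries lam w z₁ :=
  sub_le_tsum_sub_tsum (summable_regResolvent htop hw hwsum z₁)
    (summable_regResolvent htop hw hwsum z₂)
    (fun n => mul_le_mul_of_nonneg_left
      ((strictMonoOn_regResolvent_Ioo hmono k n).monotoneOn h₁ h₂ h) (hw n)) j

lemma strictMonoOn_resolventSeries (hmono : StrictMono lam) (htop : Tendsto lam atTop atTop)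
    (hw : ∀ n, 0 ≤ w n) (hwsum : Summable fun n => w n / lam n ^ 2) {k : ℕ} (hwk : 0 < w k) :
    StrictMonoOn (resolventSeries lam w) (Ioo (lam k) (lam (k + 1))) := by
  intro z₁ h₁ z₂ h₂ h
  have hk := mul_lt_mul_of_pos_left (strictMonoOn_regResolvent_Ioo hmono k k h₁ h₂ h) hwk
  linarith [term_sub_le_resolventSeries_sub hmono htop hw hwsum k h₁ h₂ h.le]

lemma continuousOn_resolventSeries (hmono : StrictMono lam) (htop : Tendsto lam atTop atTop)
    (hw : ∀ n, 0 ≤ w n) (hwsum : Summable fun n => w n / lam n ^ 2) (k : ℕ) :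
    ContinuousOn (resolventSeries lam w) (Ioo (lam k) (lam (k + 1))) :=
  continuousOn_tsum_of_monotoneOn
    (fun n => (continuousOn_regResolvent_Ioo hmono k n).const_smul (w n))
    (fun n _ hx _ hy h => mul_le_mul_of_nonneg_left
      ((strictMonoOn_regResolvent_Ioo hmono k n).monotoneOn hx hy h) (hw n))
    (fun z _ => summable_regResolvent htop hw hwsum z)

lemma tendsto_resolventSeries_nhdsGT (hmono : StrictMono lam) (htop : Tendsto lam atTop atTop)
    (hw : ∀ n, 0 ≤ w n) (hwsum : Summable fun n => w n / lam n ^ 2) {k : ℕ} (hwk : 0 < w k) :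
    Tendsto (resolventSeries lam w) (𝓝[>] (lam k)) atBot := by
  obtain ⟨m, hkm, hm⟩ := exists_between (hmono k.lt_succ_self)
  have hlim := ((tendsto_regResolvent_nhdsGT (lam k)).const_mul_atBot hwk).atBot_add
    (tendsto_const_nhds (x := resolventSeries lam w m - w k * regResolvent (lam k) m))
  refine tendsto_atBot_mono' _ ?_ hlim
  filter_upwards [Ioo_mem_nhdsGT hkm] with z hz
  have := term_sub_le_resolventSeries_sub hmono htop hw hwsum k
    ⟨hz.1, hz.2.trans hm⟩ ⟨hkm, hm⟩ hz.2.le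
  linarith

lemma tendsto_resolventSeries_nhdsLT (hmono : StrictMono lam) (htop : Tendsto lam atTop atTop)
    (hw : ∀ n, 0 ≤ w n) (hwsum : Summable fun n => w n / lam n ^ 2) {k : ℕ} (hwk : 0 < w (k + 1)) :
    Tendsto (resolventSeries lam w) (𝓝[<] (lam (k + 1))) atTop := by
  obtain ⟨m, hkm, hm⟩ := exists_between (hmono k.lt_succ_self)
  have hlim := ((tendsto_regResolvent_nhdsLT (lam (k + 1))).const_mul_atTop hwk).atTop_add
    (tendsto_const_nhds (x := resolventSeries lam w m - w (k + 1) * regResolvent (lam (k + 1)) m))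
  refine tendsto_atTop_mono' _ ?_ hlim
  filter_upwards [Ioo_mem_nhdsLT hm] with z hz
  have := term_sub_le_resolventSeries_sub hmono htop hw hwsum (k + 1)
    ⟨hkm, hm⟩ ⟨hkm.trans hz.1, hz.2⟩ hz.1.le
  linarith

end Interlacing

theorem stmt_15_general (lam w : ℕ → ℝ) (hmono : StrictMono lam)
    (htop : Filter.Tendsto lam Filter.atTop Filter.atTop)
    (hw : ∀ n, 0 < w n)
    (hwsum : Summable (fun n => w n / (lam n) ^ 2))
    (F : ℝ → ℝ)
    (hF : F = fun z => ∑' n, w n * (1 / (lam n - z) - lam n / ((lam n) ^ 2 + 1)))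
    (k : ℕ) :
    StrictMonoOn F (Set.Ioo (lam k) (lam (k + 1))) ∧
    ContinuousOn F (Set.Ioo (lam k) (lam (k + 1))) ∧
    Filter.Tendsto F (nhdsWithin (lam k) (Set.Ioi (lam k))) Filter.atBot ∧
    Filter.Tendsto F (nhdsWithin (lam (k + 1)) (Set.Iio (lam (k + 1)))) Filter.atTop ∧
    ∀ α : ℝ, ∃! z : ℝ, z ∈ Set.Ioo (lam k) (lam (k + 1)) ∧ F z = α := by
  obtain rfl : F = resolventSeries lam w := hF
  have hw₀ : ∀ n, 0 ≤ w n := fun n => (hw n).le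
  have hmonoOn := strictMonoOn_resolventSeries hmono htop hw₀ hwsum (hw k)
  have hcont := continuousOn_resolventSeries hmono htop hw₀ hwsum k
  have hbot := tendsto_resolventSeries_nhdsGT hmono htop hw₀ hwsum (hw k)
  have htop' := tendsto_resolventSeries_nhdsLT hmono htop hw₀ hwsum (hw (k + 1))
  exact ⟨hmonoOn, hcont, hbot, htop',
    existsUnique_eq_of_strictMonoOn_Ioo (hmono k.lt_succ_self) hmonoOn hcont hbot htop'⟩

theorem stmt_15 (lam w : ℕ → ℝ) (hmono : StrictMono lam)
    (hpos : ∀ n, 0 < lam n)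
    (htop : Filter.Tendsto lam Filter.atTop Filter.atTop)
    (hw : ∀ n, 0 < w n)
    (hwsum : Summable (fun n => w n / (lam n) ^ 2))
    (F : ℝ → ℝ)
    (hF : F = fun z => ∑' n, w n * (1 / (lam n - z) - lam n / ((lam n) ^ 2 + 1)))
    (k : ℕ) :
    StrictMonoOn F (Set.Ioo (lam k) (lam (k + 1))) ∧
    ContinuousOn F (Set.Ioo (lam k) (lam (k + 1))) ∧
    Filter.Tendsto F (nhdsWithin (lam k) (Set.Ioi (lam k))) Filter.atBot ∧
    Filter.Tendsto F (nhdsWithin (lam (k + 1)) (Set.Iio (lam (k + 1)))) Filter.atTop ∧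
    ∀ α : ℝ, ∃! z : ℝ, z ∈ Set.Ioo (lam k) (lam (k + 1)) ∧ F z = α :=
  stmt_15_general lam w hmono htop hw hwsum F hF k
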